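/- arXiv:2105.02537 — 7 statements merged into one kernel-verified Lean document; each statement's English description precedes it below -/
import Mathlib

section
/- Every weak brace is an inverse semi-brace; that is, in a weak brace S, the identity -a + a∘b = a∘(a⁻ + b) holds for all a, b ∈ S. -/
/-- A weak (left) brace: `(S,+)` and `(S,∘)` are inverse semigroups (with designated
inverse maps `neg` and `inv`), satisfying `a∘(b+c) = a∘b - a + a∘c` and `a∘a⁻ = -a + a`. -/
structure WeakBrace (S : Type*) where
  add : S → S → S
  mul : S → S → S
  neg : S → S
  inv : S → S
  add_assoc : ∀ a b c : S, add (add a b) c = add a (add b c)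
  mul_assoc : ∀ a b c : S, mul (mul a b) c = mul a (mul b c)
  add_neg_add : ∀ a : S, add (add a (neg a)) a = a
  neg_add_neg : ∀ a : S, add (add (neg a) a) (neg a) = neg a
  neg_unique : ∀ a x : S, add (add a x) a = a → add (add x a) x = x → x = neg a
  mul_inv_mul : ∀ a : S, mul (mul a (inv a)) a = a
  inv_mul_inv : ∀ a : S, mul (mul (inv a) a) (inv a) = inv a
  inv_unique : ∀ a x : S, mul (mul a x) a = a → mul (mul x a) x = x → x = inv a
  distrib : ∀ a b c : S, mul a (add b c) = add (add (mul a b) (neg a)) (mul a c)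
  mul_inv_eq : ∀ a : S, mul a (inv a) = add (neg a) a

namespace WeakBrace

variable {S : Type*} (W : WeakBrace S)

theorem mul_inv_add_neg (a : S) : W.add (W.mul a (W.inv a)) (W.neg a) = W.neg a := by
  rw [W.mul_inv_eq, W.neg_add_neg]

end WeakBrace

theorem weakBrace_is_inverse_semibrace {S : Type*} (W : WeakBrace S) :
    ∀ a b : S, W.add (W.neg a) (W.mul a b) = W.mul a (W.add (W.inv a) b) := by
  intro a b
  rw [W.distrib, W.mul_inv_add_neg]
end

section
/- In a weak brace S, the sets of idempotents E(S,+) and E(S,∘) coincide. -/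
section InverseSemigroup

variable {S : Type*} {op : S → S → S}

theorem eq_inv_of_op_self_eq {inv : S → S}
    (inv_unique : ∀ a x : S, op (op a x) a = a → op (op x a) x = x → x = inv a)
    {a : S} (h : op a a = a) : a = inv a :=
  inv_unique a a (by rw [h, h]) (by rw [h, h])

theorem op_op_self_eq_of_op_op_eq (assoc : ∀ a b c : S, op (op a b) c = op a (op b c))
    {x y : S} (h : op (op x y) x = x) : op (op x y) (op x y) = op x y := by
  rw [← assoc, h]

end InverseSemigroup

theorem weakBrace_idempotents_coincide {S : Type*} (W : WeakBrace S) :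
    ∀ a : S, W.add a a = a ↔ W.mul a a = a := by
  intro a
  constructor
  · intro h
    have self_neg : a = W.neg a := eq_inv_of_op_self_eq W.neg_unique h
    have mul_inv_self : W.mul a (W.inv a) = a := by rw [W.mul_inv_eq, ← self_neg, h]
    simpa only [mul_inv_self] using op_op_self_eq_of_op_op_eq W.mul_assoc (W.mul_inv_mul a)
  · intro h
    have self_inv : a = W.inv a := eq_inv_of_op_self_eq W.inv_unique h
    have neg_add_self : W.add (W.neg a) a = a := by rw [← W.mul_inv_eq, ← self_inv, h]
    simpa only [neg_add_self] using op_op_self_eq_of_op_op_eq W.add_assoc (W.neg_add_neg a)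
end

section
/- In a weak brace S, (S,+) is a monoid with identity 0 if and only if (S,∘) is a monoid with the same identity 0. -/
/-!
In an inverse semigroup an element is determined by its inverse, and a right identity is a
two-sided identity. If `z` is a right identity of `(S,+)`, expanding `a∘z = a∘(z+z)` and
`a∘a⁻ = a∘(a⁻+z)` with the brace law shows that `-a` is the inverse of `a∘z`, so `a∘z = a`.
If `z` is a left identity of `(S,∘)`, then `z+z = z∘(z+z) = z - z + z = z`, hence `-z = z`, and
`b+c = z∘(b+c)` becomes `(b+z)+c = b+c`, which forces `b+z = b`.
-/

structure IsInverseSemigroup {S : Type*} (op : S → S → S) (inv : S → S) : Prop where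
  assoc : ∀ a b c, op (op a b) c = op a (op b c)
  op_inv_op : ∀ a, op (op a (inv a)) a = a
  inv_op_inv : ∀ a, op (op (inv a) a) (inv a) = inv a
  inv_unique : ∀ a x, op (op a x) a = a → op (op x a) x = x → x = inv a

namespace IsInverseSemigroup

variable {S : Type*} {op : S → S → S} {inv : S → S}

theorem inv_inv (h : IsInverseSemigroup op inv) (a : S) : inv (inv a) = a :=
  (h.inv_unique (inv a) a (h.inv_op_inv a) (h.op_inv_op a)).symm

theorem inv_injective (h : IsInverseSemigroup op inv) : Function.Injective inv :=
  Function.LeftInverse.injective h.inv_inv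

theorem inv_eq_self_of_op_self (h : IsInverseSemigroup op inv) {e : S} (he : op e e = e) :
    inv e = e :=
  (h.inv_unique e e (by rw [he, he]) (by rw [he, he])).symm

theorem op_eq_self_of_forall_op_op_eq (h : IsInverseSemigroup op inv) {e : S}
    (he : ∀ b c, op (op b e) c = op b c) (b : S) : op b e = b := by
  refine h.inv_injective (h.inv_unique _ (inv b) ?_ ?_).symm
  · rw [he, ← h.assoc, h.assoc _ b e, ← h.assoc, h.op_inv_op]
  · rw [← h.assoc, he, h.inv_op_inv]

theorem left_identity_of_right_identity (h : IsInverseSemigroup op inv) {e : S}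
    (he : ∀ a, op a e = a) (a : S) : op e a = a := by
  refine h.inv_injective (h.inv_unique _ (inv a) ?_ ?_).symm
  · rw [h.assoc, h.assoc, ← h.assoc (inv a) e a, he, ← h.assoc a, h.op_inv_op]
  · rw [← h.assoc (inv a) e a, he, h.inv_op_inv]

end IsInverseSemigroup

namespace WeakBrace

variable {S : Type*} (W : WeakBrace S) {z : S}

theorem isInverseSemigroup_add : IsInverseSemigroup W.add W.neg :=
  ⟨W.add_assoc, W.add_neg_add, W.neg_add_neg, W.neg_unique⟩

theorem isInverseSemigroup_mul : IsInverseSemigroup W.mul W.inv :=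
  ⟨W.mul_assoc, W.mul_inv_mul, W.inv_mul_inv, W.inv_unique⟩

theorem mul_eq_self_of_add_right_identity (hz : ∀ a, W.add a z = a) (a : S) :
    W.mul a z = a := by
  have hzz : W.mul a z = W.add (W.add (W.mul a z) (W.neg a)) (W.mul a z) := by
    rw [← W.distrib, hz]
  have hinv : W.add (W.neg a) a = W.add (W.neg a) (W.mul a z) :=
    calc W.add (W.neg a) a = W.mul a (W.add (W.inv a) z) := by rw [hz, W.mul_inv_eq]
      _ = W.add (W.add (W.add (W.neg a) a) (W.neg a)) (W.mul a z) := by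
        rw [W.distrib, W.mul_inv_eq]
      _ = W.add (W.neg a) (W.mul a z) := by rw [W.neg_add_neg]
  refine W.isInverseSemigroup_add.inv_injective (W.neg_unique _ (W.neg a) hzz.symm ?_).symm
  rw [← hinv, W.neg_add_neg]

theorem add_self_of_mul_left_identity (hz : ∀ a, W.mul z a = a) : W.add z z = z := by
  rw [← hz (W.add z z), W.distrib, hz, W.add_neg_add]

theorem add_add_eq_of_mul_left_identity (hz : ∀ a, W.mul z a = a) (b c : S) :
    W.add (W.add b z) c = W.add b c := by
  have hneg : W.neg z = z :=
    W.isInverseSemigroup_add.inv_eq_self_of_op_self (W.add_self_of_mul_left_identity hz)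
  rw [← hz (W.add b c), W.distrib, hz, hz, hneg]

end WeakBrace

theorem weakBrace_add_monoid_iff_mul_monoid {S : Type*} (W : WeakBrace S) (z : S) :
    (∀ a : S, W.add z a = a ∧ W.add a z = a) ↔ (∀ a : S, W.mul z a = a ∧ W.mul a z = a) := by
  constructor
  · intro h
    have hright : ∀ a, W.mul a z = a := W.mul_eq_self_of_add_right_identity fun a ↦ (h a).2
    exact fun a ↦
      ⟨W.isInverseSemigroup_mul.left_identity_of_right_identity hright a, hright a⟩
  · intro h
    have hright : ∀ a, W.add a z = a := W.isInverseSemigroup_add.op_eq_self_of_forall_op_op_eq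
      (W.add_add_eq_of_mul_left_identity fun a ↦ (h a).1)
    exact fun a ↦
      ⟨W.isInverseSemigroup_add.left_identity_of_right_identity hright a, hright a⟩
end

section
/- In a weak brace S, for all a, b ∈ S it holds that a∘(-b) = a - a∘b + a. -/
/-!
For fixed `a`, the map `λ_a b = -a + a∘b` is an endomorphism of the inverse semigroup `(S,+)`:
this is the brace identity. Homomorphisms of inverse semigroups preserve inverses, and
`-(x + y) = -y + -x` because idempotents commute, so `λ_a (-b) = -(a∘b) + a`. It remains to
see `a∘c = a + λ_a c`, i.e. that `a - a` is a left identity for `a∘c`. This comes from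
`a∘(a⁻∘a) = a`, where `a⁻∘a = -a⁻ + a⁻` is an additive idempotent and therefore commutes
additively with `c - c`.
-/

structure IsInverseSemigroup_s3 {M : Type*} [Semigroup M] (inv : M → M) : Prop where
  mul_inv_mul : ∀ x, x * inv x * x = x
  inv_mul_inv : ∀ x, inv x * x * inv x = inv x
  inv_unique : ∀ x y, x * y * x = x → y * x * y = y → y = inv x

namespace IsInverseSemigroup_s3

variable {M : Type*} [Semigroup M] {inv : M → M}

theorem inv_inv_s3 (h : IsInverseSemigroup_s3 inv) (x : M) : inv (inv x) = x :=
  (h.inv_unique (inv x) x (h.inv_mul_inv x) (h.mul_inv_mul x)).symm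

theorem inv_eq_self (h : IsInverseSemigroup_s3 inv) {e : M} (he : IsIdempotentElem e) :
    inv e = e :=
  (h.inv_unique e e (by rw [he.eq, he.eq]) (by rw [he.eq, he.eq])).symm

theorem isIdempotentElem_mul_inv (h : IsInverseSemigroup_s3 inv) (x : M) :
    IsIdempotentElem (x * inv x) := by
  rw [IsIdempotentElem, ← mul_assoc, h.mul_inv_mul]

theorem isIdempotentElem_inv_mul (h : IsInverseSemigroup_s3 inv) (x : M) :
    IsIdempotentElem (inv x * x) := by
  rw [IsIdempotentElem, ← mul_assoc, h.inv_mul_inv]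

theorem isIdempotentElem_mul (h : IsInverseSemigroup_s3 inv) {e f : M} (he : IsIdempotentElem e)
    (hf : IsIdempotentElem f) : IsIdempotentElem (e * f) := by
  set g := inv (e * f)
  have hg₁ : e * f * g * (e * f) = e * f := h.mul_inv_mul _
  have hg₂ : g * (e * f) * g = g := h.inv_mul_inv _
  -- `f * g * e` is also an inverse of `e * f`, hence equal to `g`.
  have hfge : f * g * e = g := by
    refine h.inv_unique _ _ ?_ ?_
    · calc e * f * (f * g * e) * (e * f) = (e * f) * g * (e * f) := by
            simp only [mul_assoc, ← mul_assoc f f, ← mul_assoc e e, hf.eq, he.eq]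
        _ = e * f := hg₁
    · calc f * g * e * (e * f) * (f * g * e) = f * (g * (e * f) * g) * e := by
            simp only [mul_assoc, ← mul_assoc f f, ← mul_assoc e e, hf.eq, he.eq]
        _ = f * g * e := by rw [hg₂, mul_assoc]
  have hg : IsIdempotentElem g := by
    calc g * g = f * (g * (e * f) * g) * e := by
          conv_lhs => rw [← hfge]
          simp only [mul_assoc]
      _ = g := by rw [hg₂, hfge]
  rw [← h.inv_inv_s3 (e * f), h.inv_eq_self hg]
  exact hg

theorem isIdempotentElem_comm (h : IsInverseSemigroup_s3 inv) {e f : M} (he : IsIdempotentElem e)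
    (hf : IsIdempotentElem f) : e * f = f * e := by
  have hef := h.isIdempotentElem_mul he hf
  have hfe := h.isIdempotentElem_mul hf he
  have : f * e = inv (e * f) := by
    refine h.inv_unique _ _ ?_ ?_
    · calc e * f * (f * e) * (e * f) = (e * f) * (e * f) := by
            simp only [mul_assoc, ← mul_assoc f f, ← mul_assoc e e, hf.eq, he.eq]
        _ = e * f := hef.eq
    · calc f * e * (e * f) * (f * e) = (f * e) * (f * e) := by
            simp only [mul_assoc, ← mul_assoc f f, ← mul_assoc e e, hf.eq, he.eq]
        _ = f * e := hfe.eq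
  rw [this, h.inv_eq_self hef]

theorem inv_mul (h : IsInverseSemigroup_s3 inv) (x y : M) : inv (x * y) = inv y * inv x := by
  have hcomm := h.isIdempotentElem_comm (h.isIdempotentElem_mul_inv y)
    (h.isIdempotentElem_inv_mul x)
  refine (h.inv_unique _ _ ?_ ?_).symm
  · calc x * y * (inv y * inv x) * (x * y) = x * ((y * inv y) * (inv x * x)) * y := by
          simp only [mul_assoc]
      _ = x * y := by
          rw [hcomm, ← mul_assoc x, ← mul_assoc x, h.mul_inv_mul, mul_assoc x, h.mul_inv_mul]
  · calc inv y * inv x * (x * y) * (inv y * inv x)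
          = inv y * ((inv x * x) * (y * inv y)) * inv x := by simp only [mul_assoc]
      _ = inv y * inv x := by
          rw [← hcomm, ← mul_assoc (inv y), ← mul_assoc (inv y), h.inv_mul_inv, mul_assoc (inv y),
            h.inv_mul_inv]

theorem map_inv {N : Type*} [Semigroup N] {inv' : N → N} (h : IsInverseSemigroup_s3 inv)
    (h' : IsInverseSemigroup_s3 inv') (f : M →ₙ* N) (x : M) : f (inv x) = inv' (f x) :=
  h'.inv_unique _ _ (by rw [← map_mul, ← map_mul, h.mul_inv_mul])
    (by rw [← map_mul, ← map_mul, h.inv_mul_inv])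

end IsInverseSemigroup_s3

namespace WeakBrace

variable {S : Type*} (W : WeakBrace S)

local infixl:65 " ⊹ " => W.add
local infixl:70 " ⊚ " => W.mul
local prefix:max "∼" => W.neg

abbrev addSemigroup : Semigroup S where
  mul := W.add
  mul_assoc := W.add_assoc

abbrev mulSemigroup : Semigroup S where
  mul := W.mul
  mul_assoc := W.mul_assoc

theorem isInverseSemigroup_add_s3 : @IsInverseSemigroup_s3 S W.addSemigroup W.neg :=
  @IsInverseSemigroup_s3.mk S W.addSemigroup W.neg W.add_neg_add W.neg_add_neg W.neg_unique

theorem isInverseSemigroup_mul_s3 : @IsInverseSemigroup_s3 S W.mulSemigroup W.inv :=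
  @IsInverseSemigroup_s3.mk S W.mulSemigroup W.inv W.mul_inv_mul W.inv_mul_inv W.inv_unique

theorem neg_neg (a : S) : ∼(∼a) = a :=
  letI := W.addSemigroup
  W.isInverseSemigroup_add_s3.inv_inv_s3 a

theorem neg_add (a b : S) : ∼(a ⊹ b) = ∼b ⊹ ∼a :=
  letI := W.addSemigroup
  W.isInverseSemigroup_add_s3.inv_mul a b

theorem add_comm_of_idem {e f : S} (he : e ⊹ e = e) (hf : f ⊹ f = f) : e ⊹ f = f ⊹ e :=
  letI := W.addSemigroup
  W.isInverseSemigroup_add_s3.isIdempotentElem_comm he hf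

theorem add_neg_self_idem (a : S) : (a ⊹ ∼a) ⊹ (a ⊹ ∼a) = a ⊹ ∼a :=
  letI := W.addSemigroup
  W.isInverseSemigroup_add_s3.isIdempotentElem_mul_inv a

theorem neg_add_self_idem (a : S) : (∼a ⊹ a) ⊹ (∼a ⊹ a) = ∼a ⊹ a :=
  letI := W.addSemigroup
  W.isInverseSemigroup_add_s3.isIdempotentElem_inv_mul a

theorem inv_inv_s3 (a : S) : W.inv (W.inv a) = a :=
  letI := W.mulSemigroup
  W.isInverseSemigroup_mul_s3.inv_inv_s3 a

theorem mul_inv_mul_self (a : S) : a ⊚ (W.inv a ⊚ a) = a := by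
  rw [← W.mul_assoc, W.mul_inv_mul]

theorem inv_mul_self_idem (a : S) : (W.inv a ⊚ a) ⊹ (W.inv a ⊚ a) = W.inv a ⊚ a := by
  have h : W.inv a ⊚ a = ∼(W.inv a) ⊹ W.inv a := by
    simpa only [W.inv_inv_s3] using W.mul_inv_eq (W.inv a)
  rw [h]
  exact W.neg_add_self_idem (W.inv a)

def lambda (a b : S) : S := ∼a ⊹ a ⊚ b

theorem lambda_add (a b c : S) : W.lambda a (b ⊹ c) = W.lambda a b ⊹ W.lambda a c := by
  simp only [lambda, W.distrib, W.add_assoc]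

theorem lambda_neg (a b : S) : W.lambda a (∼b) = ∼(W.lambda a b) :=
  letI := W.addSemigroup
  W.isInverseSemigroup_add_s3.map_inv W.isInverseSemigroup_add_s3 ⟨W.lambda a, W.lambda_add a⟩ b

theorem add_neg_add_mul_of_idem (a : S) {f : S} (hf : f ⊹ f = f) :
    a ⊹ ∼a ⊹ a ⊚ f = a ⊚ f ⊹ ∼a ⊹ a := by
  set e := W.inv a ⊚ a
  calc a ⊹ ∼a ⊹ a ⊚ f = a ⊚ e ⊹ ∼a ⊹ a ⊚ f := by rw [W.mul_inv_mul_self]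
    _ = a ⊚ (e ⊹ f) := (W.distrib a e f).symm
    _ = a ⊚ (f ⊹ e) := by rw [W.add_comm_of_idem (W.inv_mul_self_idem a) hf]
    _ = a ⊚ f ⊹ ∼a ⊹ a := by rw [W.distrib, W.mul_inv_mul_self]

theorem add_lambda (a b : S) : a ⊹ W.lambda a b = a ⊚ b := by
  have hb : b ⊹ ∼b ⊹ b = b := W.add_neg_add b
  calc a ⊹ W.lambda a b = a ⊹ ∼a ⊹ a ⊚ (b ⊹ ∼b ⊹ b) := by rw [hb, lambda, W.add_assoc]
    _ = (a ⊹ ∼a ⊹ a ⊚ (b ⊹ ∼b)) ⊹ ∼a ⊹ a ⊚ b := by rw [W.distrib]; simp only [W.add_assoc]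
    _ = a ⊚ (b ⊹ ∼b) ⊹ (∼a ⊹ a ⊹ ∼a) ⊹ a ⊚ b := by
      rw [W.add_neg_add_mul_of_idem a (W.add_neg_self_idem b)]; simp only [W.add_assoc]
    _ = a ⊚ (b ⊹ ∼b ⊹ b) := by rw [W.neg_add_neg, ← W.distrib]
    _ = a ⊚ b := by rw [hb]

end WeakBrace

theorem weakBrace_mul_neg {S : Type*} (W : WeakBrace S) :
    ∀ a b : S, W.mul a (W.neg b) = W.add (W.add a (W.neg (W.mul a b))) a := by
  intro a b
  calc W.mul a (W.neg b) = W.add a (W.lambda a (W.neg b)) := (W.add_lambda a _).symm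
    _ = W.add a (W.neg (W.lambda a b)) := by rw [W.lambda_neg]
    _ = W.add (W.add a (W.neg (W.mul a b))) a := by
      rw [WeakBrace.lambda, W.neg_add, W.neg_neg, W.add_assoc]
end

section
/- In a weak brace S, for each a ∈ S the map λ_a defined by λ_a(b) = -a + a∘b is an endomorphism of the inverse semigroup (S,+); moreover λ_{a∘b} = λ_a ∘ λ_b for all a, b ∈ S, i.e., λ is a semigroup homomorphism from (S,∘) to the endomorphism monoid of (S,+). -/
namespace WeakBrace

variable {S : Type*} (W : WeakBrace S)

instance : Std.Associative W.add := ⟨W.add_assoc⟩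

def lam (a b : S) : S := W.add (W.neg a) (W.mul a b)

theorem map_neg_of_map_add {f : S → S} (hf : ∀ b c, f (W.add b c) = W.add (f b) (f c))
    (b : S) : f (W.neg b) = W.neg (f b) := by
  refine W.neg_unique _ _ ?_ ?_
  · rw [← hf, ← hf, W.add_neg_add]
  · rw [← hf, ← hf, W.neg_add_neg]

theorem mul_add_add (a b c d : S) :
    W.mul a (W.add (W.add b c) d)
      = W.add (W.add (W.add (W.add (W.mul a b) (W.neg a)) (W.mul a c)) (W.neg a)) (W.mul a d) := by
  rw [W.distrib, W.distrib]

theorem lam_add (a b c : S) : W.lam a (W.add b c) = W.add (W.lam a b) (W.lam a c) := by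
  simp only [lam, W.distrib]
  ac_rfl

theorem lam_neg (a b : S) : W.lam a (W.neg b) = W.neg (W.lam a b) :=
  W.map_neg_of_map_add (W.lam_add a) b

theorem neg_mul (a b : S) : W.neg (W.mul a b) = W.add (W.lam a (W.neg b)) (W.neg a) := by
  refine (W.neg_unique _ _ ?_ ?_).symm
  · calc W.add (W.add (W.mul a b) (W.add (W.lam a (W.neg b)) (W.neg a))) (W.mul a b)
        = W.mul a (W.add (W.add b (W.neg b)) b) := by rw [mul_add_add, lam]; ac_rfl
      _ = W.mul a b := by rw [W.add_neg_add]
  · calc W.add (W.add (W.add (W.lam a (W.neg b)) (W.neg a)) (W.mul a b))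
          (W.add (W.lam a (W.neg b)) (W.neg a))
        = W.add (W.add (W.neg a) (W.mul a (W.add (W.add (W.neg b) b) (W.neg b)))) (W.neg a) := by
          rw [mul_add_add, lam]; ac_rfl
      _ = W.add (W.lam a (W.neg b)) (W.neg a) := by rw [W.neg_add_neg, lam]

theorem lam_mul (a b c : S) : W.lam (W.mul a b) c = W.lam a (W.lam b c) := by
  rw [lam, neg_mul, W.mul_assoc]
  simp only [lam, W.distrib]
  ac_rfl

end WeakBrace

theorem weakBrace_lambda_hom {S : Type*} (W : WeakBrace S) :
    (∀ a b c : S, W.add (W.neg a) (W.mul a (W.add b c))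
        = W.add (W.add (W.neg a) (W.mul a b)) (W.add (W.neg a) (W.mul a c))) ∧
    (∀ a b : S, W.add (W.neg a) (W.mul a (W.neg b)) = W.neg (W.add (W.neg a) (W.mul a b))) ∧
    (∀ a b : S, (fun c => W.add (W.neg (W.mul a b)) (W.mul (W.mul a b) c))
        = (fun c => W.add (W.neg a) (W.mul a c)) ∘ (fun c => W.add (W.neg b) (W.mul b c))) :=
  ⟨W.lam_add, W.lam_neg, fun a b => funext (W.lam_mul a b)⟩
end

section
/- If (S,+,∘) is a weak brace and a +ᵒᵖ b := b + a, then (S, +ᵒᵖ, ∘) is again a weak brace (the opposite weak brace). -/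
/-!
Everything in the opposite structure is inherited from `W` except the law `a∘a⁻ = a - a`, which
says that `-a + a = a - a`. Put `u = a∘(-a⁻)`. Expanding `(a∘a⁻)∘(a + a)` and `a∘(a⁻∘a)` by the
distributive law gives `a + a = u - a + a` and `a = u - a - a + a`, hence `a + a - a - a + a = a`.
Adding `-a` on the left of this identity, and `a` on the left of the same identity for `-a`, shows
that the idempotents `e = -a + a` and `f = a - a` satisfy `e + f + e = e` and `f + e + f = f`.
So `f = -e`, and an idempotent is its own inverse.
-/

class InverseAddSemigroup (M : Type*) extends AddSemigroup M, Neg M where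
  add_neg_add (a : M) : a + -a + a = a
  neg_add_neg (a : M) : -a + a + -a = -a
  eq_neg_of_add_add (a x : M) : a + x + a = a → x + a + x = x → x = -a

class InverseSemigroup (M : Type*) extends Semigroup M, Inv M where
  mul_inv_mul (a : M) : a * a⁻¹ * a = a
  inv_mul_inv (a : M) : a⁻¹ * a * a⁻¹ = a⁻¹
  eq_inv_of_mul_mul (a x : M) : a * x * a = a → x * a * x = x → x = a⁻¹

attribute [to_additive] InverseSemigroup

namespace InverseSemigroup

variable {M : Type*} [InverseSemigroup M]

@[to_additive]
protected theorem inv_inv (a : M) : a⁻¹⁻¹ = a :=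
  (eq_inv_of_mul_mul a⁻¹ a (inv_mul_inv a) (mul_inv_mul a)).symm

@[to_additive]
theorem inv_eq_self_of_mul_self {e : M} (he : e * e = e) : e⁻¹ = e :=
  (eq_inv_of_mul_mul e e (by rw [he, he]) (by rw [he, he])).symm

@[to_additive]
theorem mul_mul_inv_mul (a : M) : a * (a⁻¹ * a) = a := by
  rw [← mul_assoc, mul_inv_mul]

@[to_additive]
theorem inv_mul_self_mul_inv_mul_self (a : M) : a⁻¹ * a * (a⁻¹ * a) = a⁻¹ * a := by
  rw [← mul_assoc, inv_mul_inv]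

end InverseSemigroup

structure IsWeakBrace (S : Type*) [InverseAddSemigroup S] [InverseSemigroup S] : Prop where
  mul_add (a b c : S) : a * (b + c) = a * b + -a + a * c
  mul_inv (a : S) : a * a⁻¹ = -a + a

namespace IsWeakBrace

open InverseSemigroup InverseAddSemigroup

variable {S : Type*} [InverseAddSemigroup S] [InverseSemigroup S] (h : IsWeakBrace S)
include h

theorem inv_mul_self (a : S) : a⁻¹ * a = -a⁻¹ + a⁻¹ := by
  simpa only [InverseSemigroup.inv_inv] using h.mul_inv a⁻¹

theorem mul_inv_mul_add_self (a : S) : a * a⁻¹ * (a + a) = a + a := by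
  have hneg : -(a * a⁻¹) = -a + a := by
    rw [h.mul_inv, neg_eq_self_of_add_self (neg_add_self_add_neg_add_self a)]
  rw [h.mul_add, mul_inv_mul, hneg, add_add_neg_add]

theorem inv_mul_add_self (a : S) : a⁻¹ * (a + a) = -a⁻¹ + a⁻¹ * a := by
  rw [h.mul_add, h.inv_mul_self, neg_add_neg]

theorem add_self_eq_mul_neg_inv_add (a : S) : a + a = a * -a⁻¹ + -a + a :=
  calc a + a = a * a⁻¹ * (a + a) := (h.mul_inv_mul_add_self a).symm
    _ = a * (-a⁻¹ + a⁻¹ * a) := by rw [mul_assoc, h.inv_mul_add_self]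
    _ = a * -a⁻¹ + -a + a := by rw [h.mul_add, mul_mul_inv_mul]

theorem self_eq_mul_neg_inv_add (a : S) : a = a * -a⁻¹ + -a + (-a + a) :=
  calc a = a * (a⁻¹ * a) := (mul_mul_inv_mul a).symm
    _ = a * (-a⁻¹ + a⁻¹) := by rw [h.inv_mul_self]
    _ = a * -a⁻¹ + -a + (-a + a) := by rw [h.mul_add, h.mul_inv]

theorem add_self_add_neg_add_neg_add_self (a : S) : a + a + -a + -a + a = a :=
  calc a + a + -a + -a + a = a * -a⁻¹ + (-a + a + -a) + -a + a := by
        rw [h.add_self_eq_mul_neg_inv_add a]; simp only [add_assoc]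
    _ = a * -a⁻¹ + -a + (-a + a) := by rw [neg_add_neg, add_assoc]
    _ = a := (h.self_eq_mul_neg_inv_add a).symm

theorem neg_add_self_eq_add_neg_self (a : S) : -a + a = a + -a := by
  have hefe : -a + a + (a + -a) + (-a + a) = -a + a := by
    simpa only [add_assoc] using congrArg (-a + ·) (h.add_self_add_neg_add_neg_add_self a)
  have hfef : a + -a + (-a + a) + (a + -a) = a + -a := by
    simpa only [add_assoc, InverseAddSemigroup.neg_neg] using
      congrArg (a + ·) (h.add_self_add_neg_add_neg_add_self (-a))
  rw [eq_neg_of_add_add _ _ hefe hfef, neg_eq_self_of_add_self (neg_add_self_add_neg_add_self a)]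

end IsWeakBrace

namespace WeakBrace

variable {S : Type*} (W : WeakBrace S)

@[reducible]
def toInverseAddSemigroup : InverseAddSemigroup S where
  add := W.add
  add_assoc := W.add_assoc
  neg := W.neg
  add_neg_add := W.add_neg_add
  neg_add_neg := W.neg_add_neg
  eq_neg_of_add_add := W.neg_unique

@[reducible]
def toInverseSemigroup : InverseSemigroup S where
  mul := W.mul
  mul_assoc := W.mul_assoc
  inv := W.inv
  mul_inv_mul := W.mul_inv_mul
  inv_mul_inv := W.inv_mul_inv
  eq_inv_of_mul_mul := W.inv_unique

theorem neg_add_self_eq_add_neg_self (a : S) : W.add (W.neg a) a = W.add a (W.neg a) :=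
  letI := W.toInverseAddSemigroup
  letI := W.toInverseSemigroup
  IsWeakBrace.neg_add_self_eq_add_neg_self ⟨W.distrib, W.mul_inv_eq⟩ a

def op : WeakBrace S where
  add a b := W.add b a
  mul := W.mul
  neg := W.neg
  inv := W.inv
  add_assoc a b c := (W.add_assoc c b a).symm
  mul_assoc := W.mul_assoc
  add_neg_add a := (W.add_assoc _ _ _).symm.trans (W.add_neg_add a)
  neg_add_neg a := (W.add_assoc _ _ _).symm.trans (W.neg_add_neg a)
  neg_unique a x h₁ h₂ :=
    W.neg_unique a x ((W.add_assoc _ _ _).trans h₁) ((W.add_assoc _ _ _).trans h₂)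
  mul_inv_mul := W.mul_inv_mul
  inv_mul_inv := W.inv_mul_inv
  inv_unique := W.inv_unique
  distrib a b c := (W.distrib a c b).trans (W.add_assoc _ _ _)
  mul_inv_eq a := (W.mul_inv_eq a).trans (W.neg_add_self_eq_add_neg_self a)

end WeakBrace

theorem weakBrace_opposite {S : Type*} (W : WeakBrace S) :
    ∃ W' : WeakBrace S, (∀ a b : S, W'.add a b = W.add b a) ∧ W'.mul = W.mul ∧
      W'.neg = W.neg ∧ W'.inv = W.inv :=
  ⟨W.op, fun _ _ => rfl, rfl, rfl, rfl⟩
end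

section
/- Let S be a weak brace whose additive semigroup (S,+) is idempotent (every element satisfies a + a = a), and r the solution r(a,b) = (a∘(a⁻+b), (a⁻+b)⁻∘b). Then r³ = r². -/
/-!
Idempotence of `+` forces `-a = a`, hence `a ∘ a = a ∘ a⁻ = -a + a = a` and `a⁻ = a`. An
idempotent semigroup with unique inverses is commutative, so `(S,+)` and `(S,∘)` are both
semilattices and the brace law reads `a ∘ (b + c) = a ∘ b + a + a ∘ c`. Evaluating both sides
of `(a ∘ (a + b)) ∘ b = a ∘ ((a + b) ∘ b)` gives `a ∘ b + b = a ∘ b + a`; substituting `a ∘ b`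
for `a` shows that `a ∘ b` absorbs both `a` and `b`. Therefore `r (a, b) = (a ∘ b, a ∘ b)`,
so `r` is idempotent.
-/

theorem comm_of_idem_of_inverse_unique {S : Type*} (op : S → S → S) (iv : S → S)
    (assoc : ∀ a b c : S, op (op a b) c = op a (op b c))
    (inverse_unique : ∀ a x : S, op (op a x) a = a → op (op x a) x = x → x = iv a)
    (idem : ∀ a : S, op a a = a) (a b : S) : op a b = op b a := by
  have op_op_self_left : ∀ a x : S, op a (op a x) = op a x := fun a x => by
    rw [← assoc, idem]
  -- `b a` is an inverse of `a b`, as is `a b` itself.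
  have inverse : ∀ a b : S, op (op (op a b) (op b a)) (op a b) = op a b := fun a b => by
    simp only [assoc]
    rw [op_op_self_left b, op_op_self_left a, ← assoc a b (op a b), idem]
  have self_inverse : ∀ a : S, op (op a a) a = a := fun a => by rw [idem, idem]
  exact (inverse_unique _ _ (self_inverse _) (self_inverse _)).trans
    (inverse_unique _ _ (inverse a b) (inverse b a)).symm

namespace WeakBrace

variable {S : Type*} (W : WeakBrace S)

theorem neg_eq_self (hidem : ∀ a : S, W.add a a = a) (a : S) : W.neg a = a :=
  (W.neg_unique a a (by rw [hidem, hidem]) (by rw [hidem, hidem])).symm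

theorem mul_self (hidem : ∀ a : S, W.add a a = a) (a : S) : W.mul a a = a := by
  have mul_inv : W.mul a (W.inv a) = a := by rw [W.mul_inv_eq, W.neg_eq_self hidem, hidem]
  simpa only [mul_inv] using W.mul_inv_mul a

theorem inv_eq_self (hidem : ∀ a : S, W.add a a = a) (a : S) : W.inv a = a :=
  (W.inv_unique a a (by rw [W.mul_self hidem, W.mul_self hidem])
    (by rw [W.mul_self hidem, W.mul_self hidem])).symm

theorem add_comm (hidem : ∀ a : S, W.add a a = a) (a b : S) : W.add a b = W.add b a :=
  comm_of_idem_of_inverse_unique W.add W.neg W.add_assoc W.neg_unique hidem a b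

theorem mul_comm (hidem : ∀ a : S, W.add a a = a) (a b : S) : W.mul a b = W.mul b a :=
  comm_of_idem_of_inverse_unique W.mul W.inv W.mul_assoc W.inv_unique (W.mul_self hidem) a b

theorem add_add_self (hidem : ∀ a : S, W.add a a = a) (a b : S) :
    W.add (W.add a b) a = W.add a b := by
  rw [W.add_assoc, W.add_comm hidem b a, ← W.add_assoc, hidem]

theorem mul_add (hidem : ∀ a : S, W.add a a = a) (a b c : S) :
    W.mul a (W.add b c) = W.add (W.add (W.mul a b) a) (W.mul a c) := by
  rw [W.distrib, W.neg_eq_self hidem]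

theorem mul_self_add (hidem : ∀ a : S, W.add a a = a) (a b : S) :
    W.mul a (W.add a b) = W.add a (W.mul a b) := by
  rw [W.mul_add hidem, W.mul_self hidem, hidem]

theorem add_mul_self (hidem : ∀ a : S, W.add a a = a) (a b : S) :
    W.mul (W.add a b) b = W.add (W.mul a b) b := by
  rw [W.mul_comm hidem, W.mul_add hidem, W.mul_self hidem, W.add_assoc, hidem,
    W.mul_comm hidem b a]

theorem mul_add_right_eq_mul_add_left (hidem : ∀ a : S, W.add a a = a) (a b : S) :
    W.add (W.mul a b) b = W.add (W.mul a b) a := by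
  have assoc_left : W.mul (W.mul a (W.add a b)) b = W.add (W.mul a b) b := by
    rw [W.mul_self_add hidem, W.mul_comm hidem _ b, W.mul_add hidem, ← W.mul_assoc,
      W.mul_comm hidem b a, W.mul_assoc, W.mul_self hidem, W.add_add_self hidem]
  have assoc_right : W.mul a (W.mul (W.add a b) b) = W.add (W.mul a b) a := by
    rw [W.add_mul_self hidem, W.mul_add hidem, ← W.mul_assoc, W.mul_self hidem,
      W.add_add_self hidem]
  rw [← assoc_left, W.mul_assoc, assoc_right]

theorem mul_add_right_eq_self (hidem : ∀ a : S, W.add a a = a) (a b : S) :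
    W.add (W.mul a b) b = W.mul a b := by
  have h := W.mul_add_right_eq_mul_add_left hidem (W.mul a b) b
  rwa [W.mul_assoc, W.mul_self hidem, hidem] at h

theorem mul_add_left_eq_self (hidem : ∀ a : S, W.add a a = a) (a b : S) :
    W.add (W.mul a b) a = W.mul a b := by
  rw [← W.mul_add_right_eq_mul_add_left hidem, W.mul_add_right_eq_self hidem]

theorem mul_self_add_eq_mul (hidem : ∀ a : S, W.add a a = a) (a b : S) :
    W.mul a (W.add a b) = W.mul a b := by
  rw [W.mul_self_add hidem, W.add_comm hidem, W.mul_add_left_eq_self hidem]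

theorem add_mul_self_eq_mul (hidem : ∀ a : S, W.add a a = a) (a b : S) :
    W.mul (W.add a b) b = W.mul a b := by
  rw [W.add_mul_self hidem, W.mul_add_right_eq_self hidem]

end WeakBrace

theorem weakBrace_idem_add_r_cubed_eq_squared {S : Type*} (W : WeakBrace S)
    (add_idem : ∀ a : S, W.add a a = a) :
    let r : S × S → S × S := fun p =>
      (W.mul p.1 (W.add (W.inv p.1) p.2), W.mul (W.inv (W.add (W.inv p.1) p.2)) p.2)
    r ∘ r ∘ r = r ∘ r := by
  intro r
  have r_apply (a b : S) : r (a, b) = (W.mul a b, W.mul a b) := by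
    simp only [r, W.inv_eq_self add_idem, W.mul_self_add_eq_mul add_idem,
      W.add_mul_self_eq_mul add_idem]
  have r_idem : r ∘ r = r := by
    funext p
    obtain ⟨a, b⟩ := p
    rw [Function.comp_apply, r_apply a b, r_apply, W.mul_self add_idem]
  exact congrArg (r ∘ ·) r_idem
end
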